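/- Let f : ℝⁿ → (0,∞) be twice differentiable and let i ≠ j be indices. Suppose that for all x ∈ ℝⁿ, f(x)·∂²f/∂xᵢ∂xⱼ(x) = ∂f/∂xᵢ(x)·∂f/∂xⱼ(x). Then there exist positive functions g₁ not depending on xᵢ and g₂ not depending on xⱼ such that f(x) = g₁(x)·g₂(x) for all x. -/

import Mathlib

/-- Partial derivative of `f` in coordinate `i` at `x`. -/
noncomputable def pd {n : ℕ} (i : Fin n) (f : (Fin n → ℝ) → ℝ) (x : Fin n → ℝ) : ℝ :=
  deriv (fun t => f (Function.update x i t)) (x i)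

/-- Mixed second partial derivative ∂²f/∂xᵢ∂xⱼ at `x`. -/
noncomputable def pd2 {n : ℕ} (i j : Fin n) (f : (Fin n → ℝ) → ℝ) (x : Fin n → ℝ) : ℝ :=
  pd j (fun y => pd i f y) x

/-- `f` does not depend on coordinate `i`. -/
def IndepOf {n : ℕ} (i : Fin n) (f : (Fin n → ℝ) → ℝ) : Prop :=
  ∀ x t, f (Function.update x i t) = f x

section aux
variable {n : ℕ}

lemma hasDerivAt_slice {f : (Fin n → ℝ) → ℝ} (hf : Differentiable ℝ f) (k : Fin n)
    (x : Fin n → ℝ) (t : ℝ) :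
    HasDerivAt (fun s => f (Function.update x k s))
      (fderiv ℝ f (Function.update x k t) (Pi.single k 1)) t :=
  (hf _).hasFDerivAt.comp_hasDerivAt t (hasDerivAt_update x k t)

lemma pd_eq_fderiv {f : (Fin n → ℝ) → ℝ} (hf : Differentiable ℝ f) (k : Fin n)
    (x : Fin n → ℝ) : pd k f x = fderiv ℝ f x (Pi.single k 1) := by
  have h := hasDerivAt_slice hf k x (x k)
  rw [Function.update_eq_self] at h
  exact h.deriv

end aux

/-- σ = exp case: if `f·∂²f/∂xᵢ∂xⱼ = ∂f/∂xᵢ·∂f/∂xⱼ` everywhere for a positive C²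
function `f`, then `f` splits multiplicatively into positive factors, one independent
of `xᵢ` and one independent of `xⱼ`. -/
theorem multiplicative_split_of_log_separable
    {n : ℕ} (f : (Fin n → ℝ) → ℝ) (i j : Fin n) (hij : i ≠ j)
    (hf : ContDiff ℝ 2 f) (hpos : ∀ x, 0 < f x)
    (hcond : ∀ x, f x * pd2 i j f x = pd i f x * pd j f x) :
    ∃ g₁ g₂ : (Fin n → ℝ) → ℝ, (∀ x, 0 < g₁ x) ∧ (∀ x, 0 < g₂ x) ∧
      IndepOf i g₁ ∧ IndepOf j g₂ ∧ ∀ x, f x = g₁ x * g₂ x := by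
  have hfd : Differentiable ℝ f := hf.differentiable (by norm_num)
  set L : (Fin n → ℝ) → ℝ := fun y => Real.log (f y) with hL
  have hLd : Differentiable ℝ L := fun y => ((hfd y).log (hpos y).ne')
  set gi : (Fin n → ℝ) → ℝ := fun y => fderiv ℝ f y (Pi.single i 1) with hgidef
  have giC : ContDiff ℝ 1 (fun y => fderiv ℝ f y) := hf.fderiv_right (by norm_num)
  have gid : Differentiable ℝ gi :=
    (giC.clm_apply contDiff_const).differentiable one_ne_zero
  have hgi : ∀ y, pd i f y = gi y := fun y => pd_eq_fderiv hfd i y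
  -- pd i L = pd i f / f
  have hpdiL : ∀ y, pd i L y = pd i f y / f y := by
    intro y
    have h := hasDerivAt_slice hfd i y (y i)
    rw [Function.update_eq_self] at h
    have h2 := h.log (by rw [Function.update_eq_self]; exact (hpos y).ne')
    rw [Function.update_eq_self] at h2
    rw [pd_eq_fderiv hfd i y]
    exact h2.deriv
  -- derivative of t ↦ pd i L (update x j t) is 0
  have keyzero : ∀ x : Fin n → ℝ,
      HasDerivAt (fun t => pd i L (Function.update x j t)) 0 (x j) := by
    intro x
    have hnum0 := hasDerivAt_slice gid j x (x j)
    rw [Function.update_eq_self] at hnum0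
    have hden := hasDerivAt_slice hfd j x (x j)
    rw [Function.update_eq_self] at hden
    have hpd2 : pd2 i j f x = fderiv ℝ gi x (Pi.single j 1) := by
      have hnum' : HasDerivAt (fun t => pd i f (Function.update x j t))
          (fderiv ℝ gi x (Pi.single j 1)) (x j) := by
        refine hnum0.congr_of_eventuallyEq ?_
        exact Filter.Eventually.of_forall fun t => (hgi _)
      simpa [pd2, pd, Function.update_eq_self] using hnum'.deriv
    have hnum : HasDerivAt (fun t => pd i f (Function.update x j t))
        (pd2 i j f x) (x j) := by
      rw [hpd2]
      exact hnum0.congr_of_eventuallyEq (Filter.Eventually.of_forall fun t => (hgi _))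
    have hdiv := hnum.div hden (by rw [Function.update_eq_self]; exact (hpos x).ne' :
      f (Function.update x j (x j)) ≠ 0)
    rw [Function.update_eq_self] at hdiv
    have hval : (pd2 i j f x * f x - pd i f x * fderiv ℝ f x (Pi.single j 1)) / f x ^ 2 = 0 := by
      rw [← pd_eq_fderiv hfd j x, div_eq_zero_iff]
      left
      linear_combination hcond x
    have hdiv' : HasDerivAt (fun t => pd i L (Function.update x j t)) 0 (x j) := by
      rw [← hval]
      refine hdiv.congr_of_eventuallyEq ?_
      exact Filter.Eventually.of_forall fun t => (hpdiL _)
    exact hdiv'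
  -- pd i L is independent of coordinate j
  have hindep : ∀ (x : Fin n → ℝ) (t : ℝ),
      pd i L (Function.update x j t) = pd i L x := by
    intro x t
    set u : ℝ → ℝ := fun s => pd i L (Function.update x j s) with hu
    have hud : Differentiable ℝ u := by
      have : u = fun s => gi (Function.update x j s) / f (Function.update x j s) := by
        funext s; rw [hu]; simp only []; rw [hpdiL, hgi]
      rw [this]
      intro s
      exact ((hasDerivAt_slice gid j x s).differentiableAt.div
        (hasDerivAt_slice hfd j x s).differentiableAt (hpos _).ne')
    have hud0 : ∀ s, deriv u s = 0 := by
      intro s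
      have h := keyzero (Function.update x j s)
      simp only [Function.update_idem] at h
      have : (Function.update x j s) j = s := Function.update_self j s x
      rw [this] at h
      exact h.deriv
    have := is_const_of_deriv_eq_zero hud hud0 t (x j)
    rw [hu] at this
    simpa [Function.update_eq_self] using this
  -- the key log identity
  have hlogid : ∀ (x : Fin n → ℝ) (t : ℝ),
      L (Function.update x j t) - L x
        = L (Function.update (Function.update x j t) i 0) - L (Function.update x i 0) := by
    intro x t
    set y := Function.update x j t with hy
    set H : ℝ → ℝ := fun s => L (Function.update y i s) - L (Function.update x i s) with hH
    have hHd : ∀ s, HasDerivAt H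
        (fderiv ℝ L (Function.update y i s) (Pi.single i 1)
          - fderiv ℝ L (Function.update x i s) (Pi.single i 1)) s :=
      fun s => (hasDerivAt_slice hLd i y s).sub (hasDerivAt_slice hLd i x s)
    have hHd' : ∀ s, deriv H s = 0 := by
      intro s
      have hcomm : Function.update y i s = Function.update (Function.update x i s) j t := by
        rw [hy, Function.update_comm hij]
      have e1 : fderiv ℝ L (Function.update y i s) (Pi.single i 1)
          = pd i L (Function.update y i s) := (pd_eq_fderiv hLd i _).symm
      have e2 : fderiv ℝ L (Function.update x i s) (Pi.single i 1)
          = pd i L (Function.update x i s) := (pd_eq_fderiv hLd i _).symm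
      rw [(hHd s).deriv, e1, e2, hcomm, hindep]
      ring
    have hconst := is_const_of_deriv_eq_zero (fun s => (hHd s).differentiableAt) hHd' (x i) 0
    rw [hH] at hconst
    simp only [] at hconst
    have hxi : Function.update y i (x i) = y := by
      rw [hy]
      have : x i = (Function.update x j t) i := (Function.update_of_ne hij t x).symm
      rw [this, Function.update_eq_self]
    rw [hxi, Function.update_eq_self] at hconst
    rw [hy] at hconst ⊢
    linarith
  refine ⟨fun x => f (Function.update x i 0), fun x => f x / f (Function.update x i 0),
    fun x => hpos _, fun x => div_pos (hpos x) (hpos _), ?_, ?_, ?_⟩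
  · intro x t; simp [Function.update_idem]
  · intro x t
    have h := hlogid x t
    have hA := hpos (Function.update x j t)
    have hB := hpos (Function.update (Function.update x j t) i 0)
    have hC := hpos x
    have hD := hpos (Function.update x i 0)
    have hlogq : Real.log (f (Function.update x j t) / f (Function.update (Function.update x j t) i 0))
        = Real.log (f x / f (Function.update x i 0)) := by
      rw [Real.log_div hA.ne' hB.ne', Real.log_div hC.ne' hD.ne']
      simp only [hL] at h
      linarith
    calc f (Function.update x j t) / f (Function.update (Function.update x j t) i 0)
        = Real.exp (Real.log (f (Function.update x j t) / f (Function.update (Function.update x j t) i 0))) :=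
          (Real.exp_log (div_pos hA hB)).symm
      _ = Real.exp (Real.log (f x / f (Function.update x i 0))) := by rw [hlogq]
      _ = f x / f (Function.update x i 0) := Real.exp_log (div_pos hC hD)
  · intro x
    rw [mul_comm, div_mul_cancel₀ _ (hpos _).ne']
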